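/- Let Φ ∈ ℝ^{a×b}, T ∈ ℝ^{a×n}, S ∈ ℝ^{m×b}, N' ∈ ℝ^{a×b}, M ∈ ℝ^{n×m}, assume every entry of T (M ⊙ M) S + N' is strictly positive, and define g(M) = −Σ_{i,j} Φ_{ij}·log[T(M⊙M)S + N']_{ij} + Σ_{i,j} [T(M⊙M)S]_{ij}. Then for each fixed (u,v), the function t ↦ g(M + t·E_{uv}) is differentiable at t = 0 with derivative 2·([(S J T)ᵀ ⊙ M]_{uv} − [(S Qᵀ T)ᵀ ⊙ M]_{uv}), where J ∈ ℝ^{b×a} is the all-ones matrix and Q_{ij} = Φ_{ij} / [T(M⊙M)S + N']_{ij}. -/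

import Mathlib

open Matrix
open scoped Matrix

/-!
The objective is the Poisson negative log-likelihood `poissonNLL Φ N'` of `Y = T (M ⊙ M) S`, so
by the chain rule its derivative is the Frobenius pairing of `Y' = 2 T (E_{uv} ⊙ M) S` with `J - Q`.
Since `E_{uv} ⊙ M = M_{uv} E_{uv}`, cyclicity of the trace collapses each pairing
`∑_{ij} W_{ji} [T (E_{uv} ⊙ M) S]_{ij} = tr (S W T (M_{uv} E_{uv}))` to `M_{uv} [S W T]_{vu}`.
-/

section Calculus

variable {ι κ μ ν : Type*}

noncomputable def poissonNLL [Fintype ι] [Fintype κ] (Φ N' Y : Matrix ι κ ℝ) : ℝ :=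
  -(∑ i, ∑ j, Φ i j * Real.log ((Y + N') i j)) + ∑ i, ∑ j, Y i j

theorem hasDerivAt_poissonNLL [Fintype ι] [Fintype κ] (Φ N' : Matrix ι κ ℝ)
    {Y : ℝ → Matrix ι κ ℝ} {Y' : Matrix ι κ ℝ} {t₀ : ℝ}
    (hY : ∀ i j, HasDerivAt (fun t => Y t i j) (Y' i j) t₀)
    (hne : ∀ i j, (Y t₀ + N') i j ≠ 0) :
    HasDerivAt (fun t => poissonNLL Φ N' (Y t))
      (∑ i, ∑ j, Y' i j - ∑ i, ∑ j, Φ i j / (Y t₀ + N') i j * Y' i j) t₀ := by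
  have hlog : ∀ i j, HasDerivAt (fun t => Φ i j * Real.log ((Y t + N') i j))
      (Φ i j / (Y t₀ + N') i j * Y' i j) t₀ := fun i j =>
    ((((hY i j).add_const (N' i j)).log (hne i j)).const_mul (Φ i j)).congr_deriv
      (by rw [Matrix.add_apply]; ring)
  have hlogSum : HasDerivAt (fun t => ∑ i, ∑ j, Φ i j * Real.log ((Y t + N') i j))
      (∑ i, ∑ j, Φ i j / (Y t₀ + N') i j * Y' i j) t₀ :=
    HasDerivAt.fun_sum fun i _ => HasDerivAt.fun_sum fun j _ => hlog i j
  have hYSum : HasDerivAt (fun t => ∑ i, ∑ j, Y t i j) (∑ i, ∑ j, Y' i j) t₀ :=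
    HasDerivAt.fun_sum fun i _ => HasDerivAt.fun_sum fun j _ => hY i j
  exact (hlogSum.neg.add hYSum).congr_deriv (neg_add_eq_sub _ _)

theorem hasDerivAt_mul_mul_apply [Fintype μ] [Fintype ν] (T : Matrix ι μ ℝ) (S : Matrix ν κ ℝ)
    {X : ℝ → Matrix μ ν ℝ} {X' : Matrix μ ν ℝ} {t₀ : ℝ}
    (hX : ∀ k l, HasDerivAt (fun t => X t k l) (X' k l) t₀)
    (i : ι) (j : κ) :
    HasDerivAt (fun t => (T * X t * S) i j) ((T * X' * S) i j) t₀ := by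
  simp only [mul_apply]
  exact HasDerivAt.fun_sum fun l _ =>
    (HasDerivAt.fun_sum fun k _ => (hX k l).const_mul (T i k)).mul_const (S l j)

theorem hasDerivAt_mul_hadamard_self_mul_apply [Fintype μ] [Fintype ν] (T : Matrix ι μ ℝ)
    (S : Matrix ν κ ℝ) (M D : Matrix μ ν ℝ) (t : ℝ) (i : ι) (j : κ) :
    HasDerivAt (fun s => (T * ((M + s • D) ⊙ (M + s • D)) * S) i j)
      (2 * (T * (D ⊙ (M + t • D)) * S) i j) t := by
  have hX : ∀ k l, HasDerivAt (fun s => ((M + s • D) ⊙ (M + s • D)) k l)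
      ((2 • (D ⊙ (M + t • D))) k l) t := fun k l => by
    have hline := ((hasDerivAt_id t).mul_const (D k l)).const_add (M k l)
    exact (hline.mul hline).congr_deriv
      (by simp only [Matrix.smul_apply, hadamard_apply, Matrix.add_apply, smul_eq_mul, id]; ring)
  simpa only [Matrix.mul_smul, Matrix.smul_mul, Matrix.smul_apply, nsmul_eq_mul, Nat.cast_ofNat]
    using hasDerivAt_mul_mul_apply T S hX i j

end Calculus

section Trace

variable {ι κ μ ν α : Type*} [DecidableEq μ] [DecidableEq ν] [CommSemiring α]

theorem single_one_hadamard (u : μ) (v : ν) (M : Matrix μ ν α) :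
    single u v 1 ⊙ M = single u v (M u v) := by
  ext k l
  simp only [hadamard_apply, single_apply]
  split_ifs with h
  · obtain ⟨rfl, rfl⟩ := h
    exact one_mul _
  · exact zero_mul _

theorem sum_sum_mul_mul_single_hadamard_mul_apply [Fintype ι] [Fintype κ] [Fintype μ]
    [Fintype ν] (W : Matrix κ ι α) (T : Matrix ι μ α) (M : Matrix μ ν α) (S : Matrix ν κ α)
    (u : μ) (v : ν) :
    ∑ i, ∑ j, W j i * (T * (single u v 1 ⊙ M) * S) i j = ((S * W * T)ᵀ ⊙ M) u v := by
  calc ∑ i, ∑ j, W j i * (T * (single u v 1 ⊙ M) * S) i j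
      = trace (W * (T * single u v (M u v) * S)) := by
        rw [single_one_hadamard, Finset.sum_comm]
        simp only [trace, diag_apply, mul_apply (M := W)]
    _ = trace (S * W * T * single u v (M u v)) := by
        rw [trace_mul_cycle']
        simp only [Matrix.mul_assoc]
    _ = ((S * W * T)ᵀ ⊙ M) u v := by
        rw [trace_mul_single, hadamard_apply, transpose_apply, MulOpposite.smul_eq_mul_unop,
          MulOpposite.unop_op, mul_comm]

end Trace

/-- Directional derivative of the objective
`g(M) = −∑_{i,j} Φ_{ij} log [T (M⊙M) S + N']_{ij} + ∑_{i,j} [T (M⊙M) S]_{ij}` in the direction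
of the standard basis matrix `E_{uv}`: it equals
`2 ([(S J T)ᵀ ⊙ M]_{uv} − [(S Qᵀ T)ᵀ ⊙ M]_{uv})`, where `J` is the all-ones matrix and
`Q_{ij} = Φ_{ij} / [T (M⊙M) S + N']_{ij}`. -/
theorem stmt6 {a b n m : ℕ} (Φ : Matrix (Fin a) (Fin b) ℝ)
    (T : Matrix (Fin a) (Fin n) ℝ) (S : Matrix (Fin m) (Fin b) ℝ)
    (N' : Matrix (Fin a) (Fin b) ℝ) (M : Matrix (Fin n) (Fin m) ℝ)
    (hpos : ∀ i j, 0 < (T * (M ⊙ M) * S + N') i j)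
    (u : Fin n) (v : Fin m) :
    HasDerivAt (fun t : ℝ =>
        -(∑ i, ∑ j, Φ i j *
          Real.log ((T * ((M + t • Matrix.single u v (1 : ℝ))
              ⊙ (M + t • Matrix.single u v (1 : ℝ))) * S + N') i j))
        + ∑ i, ∑ j, (T * ((M + t • Matrix.single u v (1 : ℝ))
              ⊙ (M + t • Matrix.single u v (1 : ℝ))) * S) i j)
      (2 * (((S * (Matrix.of fun _ _ => (1 : ℝ) : Matrix (Fin b) (Fin a) ℝ) * T)ᵀ ⊙ M) u v
          - ((S * (Matrix.of fun i j => Φ i j / (T * (M ⊙ M) * S + N') i j)ᵀ * T)ᵀ ⊙ M) u v))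
      0 := by
  have hY := hasDerivAt_mul_hadamard_self_mul_apply T S M (single u v 1) 0
  simp only [zero_smul, add_zero] at hY
  have hderiv := hasDerivAt_poissonNLL Φ N'
    (Y := fun t => T * ((M + t • single u v 1) ⊙ (M + t • single u v 1)) * S) hY
    (by simpa using fun i j => (hpos i j).ne')
  refine hderiv.congr_deriv ?_
  rw [← sum_sum_mul_mul_single_hadamard_mul_apply, ← sum_sum_mul_mul_single_hadamard_mul_apply]
  simp only [zero_smul, add_zero, of_apply, transpose_apply, one_mul, Finset.mul_sum,
    ← Finset.sum_sub_distrib, mul_sub]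
  refine Finset.sum_congr rfl fun i _ => Finset.sum_congr rfl fun j _ => ?_
  ring
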